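/- Let I − (Δτ/2)A be a real (M−1)×(M−1) matrix where A is tridiagonal with constant diagonal entries a_{jj} = −2D/(a(Δy)² L) − (g/a)L and whose symmetric part has off-diagonal (super/sub) entries all equal to −(Δτ/2)[(r_g/(4a))(C_c − c_c^∞) + D/(a(Δy)² L)] after forming (I − (Δτ/2)A + (I − (Δτ/2)A)ᵀ)/2. Assume a, D, g, r_g, Δy, Δτ, L > 0 and |C_c − c_c^∞| ≤ γ with γ > 0. If Δτ < 4a/(r_g γ), then every eigenvalue λ of the symmetric part satisfies λ ≥ 1 − Δτ·r_g·γ/(4a) > 0, and hence the linear system (I − (Δτ/2)A)x = b has a unique solution for every b. -/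

import Mathlib

/-!
By Gershgorin's theorem every eigenvalue of the symmetric part `S` of `B = I - (Δτ/2) A` lies
within `2|β|` of its diagonal entry `d₀`, where `β` is the off-diagonal entry. Since
`|β| ≤ (Δτ/2) (r_g γ/(4a) + D/(a Δy² L))`, the diffusion terms of `2|β|` are absorbed by those
of `d₀`, leaving `d₀ - 2|β| ≥ 1 - Δτ r_g γ/(4a)`, which is positive by the step-size condition.
So `S` is positive definite, and as `xᵀ B x = xᵀ S x`, `B x = 0` forces `x = 0`.
-/

open Finset
open scoped ComplexOrder

namespace Matrix

def symmTridiagToeplitz {R : Type*} [Zero R] (n : ℕ) (d e : R) : Matrix (Fin n) (Fin n) R :=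
  of fun i j => if (i : ℕ) = j then d else if (i : ℕ) + 1 = j ∨ (j : ℕ) + 1 = i then e else 0

theorem isSymm_symmTridiagToeplitz {R : Type*} [Zero R] (n : ℕ) (d e : R) :
    (symmTridiagToeplitz n d e).IsSymm :=
  IsSymm.ext fun i j => by
    simp only [symmTridiagToeplitz, of_apply, eq_comm (a := (i : ℕ)), or_comm]

theorem sum_erase_abs_symmTridiagToeplitz_le {n : ℕ} (d e : ℝ) (k : Fin n) :
    ∑ j ∈ univ.erase k, |symmTridiagToeplitz n d e k j| ≤ 2 * |e| := by
  have hterm : ∀ j ∈ univ.erase k, |symmTridiagToeplitz n d e k j|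
      = if (k : ℕ) + 1 = j ∨ (j : ℕ) + 1 = k then |e| else 0 := fun j hj => by
    have hkj : (k : ℕ) ≠ j := Fin.val_ne_of_ne (ne_of_mem_erase hj).symm
    simp only [symmTridiagToeplitz, of_apply, if_neg hkj]
    split_ifs <;> simp
  have hcard : #((univ.erase k).filter fun j : Fin n => (k : ℕ) + 1 = j ∨ (j : ℕ) + 1 = k) ≤ 2 :=
    calc _ ≤ #((univ.filter fun j : Fin n => (k : ℕ) + 1 = j) ∪
              univ.filter fun j : Fin n => (j : ℕ) + 1 = k) :=
          card_le_card fun j => by simp only [mem_filter, mem_erase, mem_union, mem_univ]; tauto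
      _ ≤ 1 + 1 := (card_union_le _ _).trans <| add_le_add
          (card_le_one.2 fun i hi j hj => Fin.ext <| by simp only [mem_filter] at hi hj; omega)
          (card_le_one.2 fun i hi j hj => Fin.ext <| by simp only [mem_filter] at hi hj; omega)
  rw [sum_congr rfl hterm, ← sum_filter, sum_const, nsmul_eq_mul]
  gcongr
  exact_mod_cast hcard

theorem sub_le_of_mem_spectrum {n : Type*} [Fintype n] [DecidableEq n] {S : Matrix n n ℝ}
    {d r μ : ℝ} (hdiag : ∀ k, S k k = d) (hrow : ∀ k, ∑ j ∈ univ.erase k, |S k j| ≤ r)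
    (hμ : μ ∈ spectrum ℝ S) : d - r ≤ μ := by
  rw [← spectrum_toLin', ← Module.End.hasEigenvalue_iff_mem_spectrum] at hμ
  obtain ⟨k, hk⟩ := eigenvalue_mem_ball hμ
  simp only [Metric.mem_closedBall, Real.dist_eq, Real.norm_eq_abs, hdiag] at hk
  linarith [neg_abs_le (μ - d), hrow k]

theorem sub_two_mul_abs_le_of_mem_spectrum_symmTridiagToeplitz {n : ℕ} {d e μ : ℝ}
    (hμ : μ ∈ spectrum ℝ (symmTridiagToeplitz n d e)) : d - 2 * |e| ≤ μ :=
  sub_le_of_mem_spectrum (fun k => by simp [symmTridiagToeplitz])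
    (sum_erase_abs_symmTridiagToeplitz_le d e) hμ

theorem IsHermitian.posDef_of_spectrum_pos {𝕜 n : Type*} [RCLike 𝕜] [Fintype n] [DecidableEq n]
    {S : Matrix n n 𝕜} (hS : S.IsHermitian) (h : ∀ μ ∈ spectrum ℝ S, 0 < μ) : S.PosDef :=
  hS.posDef_iff_eigenvalues_pos.2 fun i => h _ (hS.eigenvalues_mem_spectrum_real i)

theorem isUnit_of_posDef_symmPart {n : Type*} [Fintype n] [DecidableEq n] {B : Matrix n n ℝ}
    (h : ((1 / 2 : ℝ) • (B + Bᵀ)).PosDef) : IsUnit B := by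
  rw [← mulVec_injective_iff_isUnit, ← coe_mulVecLin, ← LinearMap.ker_eq_bot,
    LinearMap.ker_eq_bot']
  intro x hx
  replace hx : B *ᵥ x = 0 := hx
  by_contra hne
  have hpos := h.dotProduct_mulVec_pos hne
  rw [smul_mulVec, add_mulVec, dotProduct_smul, dotProduct_add, star_trivial,
    dotProduct_mulVec x Bᵀ, vecMul_transpose, hx, dotProduct_zero, zero_dotProduct,
    add_zero, smul_zero] at hpos
  exact lt_irrefl 0 hpos

end Matrix

theorem one_sub_le_diag_sub_two_abs_offdiag {τ p q s γ δ : ℝ} (hτ : 0 ≤ τ) (hp : 0 ≤ p)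
    (hq : 0 ≤ q) (hs : 0 ≤ s) (hδ : |δ| ≤ γ) :
    1 - τ * p * γ ≤ 1 + τ / 2 * (2 * q + s) - 2 * |-(τ / 2) * (p * δ + q)| := by
  have hoff : |p * δ + q| ≤ p * γ + q := calc
    _ ≤ |p * δ| + |q| := abs_add_le _ _
    _ ≤ p * γ + q := by
      rw [abs_mul, abs_of_nonneg hp, abs_of_nonneg hq]; gcongr
  rw [abs_mul, abs_neg, abs_of_nonneg (by positivity)]
  linarith [mul_le_mul_of_nonneg_left hoff hτ, mul_nonneg hτ hs]

open Matrix

theorem peaceman_rachford_implicit_step_solvable_general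
    (M : ℕ)
    (a D g rg Δy Δτ L Cc ccInf γ : ℝ)
    (ha : 0 < a) (hD : 0 < D) (hg : 0 < g) (hrg : 0 < rg)
    (hΔτ : 0 < Δτ) (hL : 0 < L) (hγ : 0 < γ)
    (hCc : |Cc - ccInf| ≤ γ)
    (hstep : Δτ < 4 * a / (rg * γ))
    (A : Matrix (Fin (M - 1)) (Fin (M - 1)) ℝ)
    (hsym : (1 / 2 : ℝ) •
        ((1 - (Δτ / 2) • A) + (1 - (Δτ / 2) • A)ᵀ)
      = Matrix.of fun i j : Fin (M - 1) =>
        if (i : ℕ) = (j : ℕ) then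
          1 + (Δτ / 2) * (2 * D / (a * Δy ^ 2 * L) + (g / a) * L)
        else if (i : ℕ) + 1 = (j : ℕ) ∨ (j : ℕ) + 1 = (i : ℕ) then
          -(Δτ / 2) * ((rg / (4 * a)) * (Cc - ccInf) + D / (a * Δy ^ 2 * L))
        else 0) :
    (∀ lam ∈ spectrum ℝ
        ((1 / 2 : ℝ) • ((1 - (Δτ / 2) • A) + (1 - (Δτ / 2) • A)ᵀ)),
      1 - Δτ * rg * γ / (4 * a) ≤ lam) ∧
    0 < 1 - Δτ * rg * γ / (4 * a) ∧
    ∀ b : Fin (M - 1) → ℝ, ∃! x, (1 - (Δτ / 2) • A).mulVec x = b := by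
  set B := 1 - (Δτ / 2) • A
  set q := D / (a * Δy ^ 2 * L)
  have hS : (1 / 2 : ℝ) • (B + Bᵀ) =
      symmTridiagToeplitz (M - 1) (1 + Δτ / 2 * (2 * q + g / a * L))
        (-(Δτ / 2) * (rg / (4 * a) * (Cc - ccInf) + q)) := by
    rw [hsym, mul_div_assoc]; rfl
  have hmargin : 0 < 1 - Δτ * rg * γ / (4 * a) := by
    rw [lt_div_iff₀ (by positivity), ← mul_assoc] at hstep
    rw [sub_pos, div_lt_one (by positivity)]
    exact hstep
  have hbound : ∀ μ ∈ spectrum ℝ ((1 / 2 : ℝ) • (B + Bᵀ)), 1 - Δτ * rg * γ / (4 * a) ≤ μ :=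
    fun μ hμ => by
      rw [hS] at hμ
      calc 1 - Δτ * rg * γ / (4 * a) = 1 - Δτ * (rg / (4 * a)) * γ := by ring
        _ ≤ _ := one_sub_le_diag_sub_two_abs_offdiag hΔτ.le (by positivity) (by positivity)
            (by positivity) hCc
        _ ≤ μ := sub_two_mul_abs_le_of_mem_spectrum_symmTridiagToeplitz hμ
  have hpos : ((1 / 2 : ℝ) • (B + Bᵀ)).PosDef := by
    rw [hS] at hbound ⊢
    exact (isHermitian_iff_isSymm.2 (isSymm_symmTridiagToeplitz _ _ _)).posDef_of_spectrum_pos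
      fun μ hμ => hmargin.trans_le (hbound μ hμ)
  have hunit := isUnit_of_posDef_symmPart hpos
  have hbij : Function.Bijective B.mulVec :=
    ⟨mulVec_injective_iff_isUnit.2 hunit, mulVec_surjective_iff_isUnit.2 hunit⟩
  exact ⟨hbound, hmargin, hbij.existsUnique⟩

theorem peaceman_rachford_implicit_step_solvable
    (M : ℕ) (hM : 2 ≤ M)
    (a D g rg Δy Δτ L Cc ccInf γ : ℝ)
    (ha : 0 < a) (hD : 0 < D) (hg : 0 < g) (hrg : 0 < rg)
    (hΔy : 0 < Δy) (hΔτ : 0 < Δτ) (hL : 0 < L) (hγ : 0 < γ)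
    (hCc : |Cc - ccInf| ≤ γ)
    (hstep : Δτ < 4 * a / (rg * γ))
    (A : Matrix (Fin (M - 1)) (Fin (M - 1)) ℝ)
    (hsym : (1 / 2 : ℝ) •
        ((1 - (Δτ / 2) • A) + (1 - (Δτ / 2) • A)ᵀ)
      = Matrix.of fun i j : Fin (M - 1) =>
        if (i : ℕ) = (j : ℕ) then
          1 + (Δτ / 2) * (2 * D / (a * Δy ^ 2 * L) + (g / a) * L)
        else if (i : ℕ) + 1 = (j : ℕ) ∨ (j : ℕ) + 1 = (i : ℕ) then
          -(Δτ / 2) * ((rg / (4 * a)) * (Cc - ccInf) + D / (a * Δy ^ 2 * L))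
        else 0) :
    (∀ lam ∈ spectrum ℝ
        ((1 / 2 : ℝ) • ((1 - (Δτ / 2) • A) + (1 - (Δτ / 2) • A)ᵀ)),
      1 - Δτ * rg * γ / (4 * a) ≤ lam) ∧
    0 < 1 - Δτ * rg * γ / (4 * a) ∧
    ∀ b : Fin (M - 1) → ℝ, ∃! x, (1 - (Δτ / 2) • A).mulVec x = b :=
  peaceman_rachford_implicit_step_solvable_general M a D g rg Δy Δτ L Cc ccInf γ ha hD hg hrg hΔτ hL
    hγ hCc hstep A hsym
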